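/- For every d ≥ 2 there exists an oriented spanning tree T_d of the set Perm(d) of permutations of {1,…,d}, rooted at the identity, such that every edge goes from a permutation α to α∘(i j) for some transposition (i j), and such that every path from the root id to a node α, read as a sequence of transpositions, is an alternated factorization of α: its first transposition contains d, and any three consecutive indices appearing in consecutive transpositions are pairwise distinct. -/

import Mathlib

/-- `u` is (the tail of) an alternated factorization of α: with chain c = (d-1) :: u,
α is the product of the swaps of consecutive chain elements, consecutive chain elements
are distinct, and chain elements at distance 2 are distinct. -/
def AltFact (d : ℕ) (hd : 0 < d) (α : Equiv.Perm (Fin d)) (u : List (Fin d)) : Prop :=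
  α = (((((⟨d - 1, by omega⟩ : Fin d) :: u).zip u).map
        fun p => Equiv.swap p.1 p.2).prod) ∧
  List.Chain' (· ≠ ·) ((⟨d - 1, by omega⟩ : Fin d) :: u) ∧
  ∀ (i : ℕ) (h : i + 2 < ((⟨d - 1, by omega⟩ : Fin d) :: u).length),
    ((⟨d - 1, by omega⟩ : Fin d) :: u).get ⟨i, by omega⟩ ≠
    ((⟨d - 1, by omega⟩ : Fin d) :: u).get ⟨i + 2, h⟩

/-!
Give each `α ≠ 1` the parent `swap m p * α`, where the pivot `p ≠ m` is a point moved by `α`,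
namely `α⁻¹ m` when `α` moves `m`. As `swap m p * α = α * swap (α⁻¹ m) (α⁻¹ p)`, walking from the
parent to `α` appends the letter `α⁻¹ m`, so the path from `1` to `β` always ends in `β⁻¹ m`.
Consecutive letters `α⁻¹ p` and `α⁻¹ m` differ because `p ≠ m`; letters two apart differ because
the parent's pivot is not `p`: if `α` moves `m` the parent fixes `p`, and otherwise the parent moves
`m` and its pivot is `α⁻¹ p ≠ p`. The quantity `2 * #(support \ {m}) + [α m = m]` decreases from a
permutation to its parent, so the tree is well founded.
-/

open Equiv

namespace SwapChain

variable {X : Type*}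

def IsAlternated (l : List X) : Prop :=
  l.IsChain (· ≠ ·) ∧ ∀ i (h : i + 2 < l.length), l[i] ≠ l[i + 2]

theorem getElem_ne_getElem_add_two_append {l : List X} {y v : X}
    (hl : ∀ i (h : i + 2 < (l ++ [y]).length), (l ++ [y])[i] ≠ (l ++ [y])[i + 2])
    (hv : ∀ w ∈ l.getLast?, w ≠ v) :
    ∀ i (h : i + 2 < (l ++ [y] ++ [v]).length),
      (l ++ [y] ++ [v])[i] ≠ (l ++ [y] ++ [v])[i + 2] := by
  intro i h
  simp only [List.length_append, List.length_singleton] at h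
  rcases Nat.lt_or_ge (i + 2) (l.length + 1) with hi | hi
  · rw [List.getElem_append_left (as := l ++ [y]) (by simp; omega),
      List.getElem_append_left (as := l ++ [y]) (by simpa using hi)]
    exact hl i (by simpa using hi)
  · obtain rfl : i = l.length - 1 := by omega
    rw [List.getElem_concat_length (i := l.length - 1 + 2) (by simp; omega),
      List.getElem_append_left (by simp), List.getElem_append_left (by omega)]
    exact hv _ (by rw [List.getLast?_eq_getElem?, List.getElem?_eq_getElem (by omega)]; rfl)

theorem IsAlternated.append_singleton {l : List X} {v : X} (hl : IsAlternated l)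
    (hlast : ∀ x ∈ l.getLast?, x ≠ v) (hprev : ∀ x ∈ l.dropLast.getLast?, x ≠ v) :
    IsAlternated (l ++ [v]) := by
  refine ⟨hl.1.append (List.isChain_singleton v) (by simpa using hlast), ?_⟩
  rcases l.eq_nil_or_concat with rfl | ⟨c, y, rfl⟩
  · simp
  · rw [List.concat_eq_append, List.dropLast_concat] at hprev
    rw [List.concat_eq_append] at hl ⊢
    exact getElem_ne_getElem_add_two_append hl.2 hprev

variable [DecidableEq X] {m : X}

def chainProd (c : List X) : Perm X :=
  ((c.zip c.tail).map fun p => swap p.1 p.2).prod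

theorem chainProd_append_singleton (c : List X) (hc : c ≠ []) (v : X) :
    chainProd (c ++ [v]) = chainProd c * swap (c.getLast hc) v := by
  induction c with
  | nil => exact absurd rfl hc
  | cons x t ih =>
    cases t with
    | nil => simp [chainProd]
    | cons y t =>
      have := ih (List.cons_ne_nil y t)
      simp_all [chainProd, mul_assoc]

open Classical in
variable (m) in
noncomputable def pivot (α : Perm X) : X :=
  if α m ≠ m then α⁻¹ m else if h : ∃ x, α x ≠ x then h.choose else m

theorem pivot_of_apply_ne {α : Perm X} (h : α m ≠ m) : pivot m α = α⁻¹ m := by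
  simp [pivot, h]

variable (m) in
theorem apply_pivot_ne {α : Perm X} (hα : α ≠ 1) : α (pivot m α) ≠ pivot m α := by
  by_cases h : α m = m
  · have hex : ∃ x, α x ≠ x := by
      by_contra! hfix
      exact hα (Equiv.ext hfix)
    simpa [pivot, h, hex] using hex.choose_spec
  · rw [pivot_of_apply_ne h, ← Perm.mul_apply, mul_inv_cancel, Perm.one_apply, Ne, Perm.eq_inv_iff_eq]
    exact h

variable (m) in
theorem pivot_ne {α : Perm X} (hα : α ≠ 1) : pivot m α ≠ m := by
  intro h
  by_cases hm : α m = m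
  · exact apply_pivot_ne m hα (by rw [h, hm])
  · rw [pivot_of_apply_ne hm, Perm.inv_eq_iff_eq] at h
    exact hm h.symm

variable (m) in
noncomputable def parent (α : Perm X) : Perm X := swap m (pivot m α) * α

theorem inv_parent_apply_self (α : Perm X) : (parent m α)⁻¹ m = α⁻¹ (pivot m α) := by
  simp [parent]

theorem inv_parent_apply_pivot (α : Perm X) : (parent m α)⁻¹ (pivot m α) = α⁻¹ m := by
  simp [parent]

theorem parent_mul_swap (α : Perm X) :
    parent m α * swap ((parent m α)⁻¹ m) (α⁻¹ m) = α := by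
  rw [inv_parent_apply_self, swap_apply_apply, inv_inv, parent, swap_comm (pivot m α)]
  simp [mul_assoc]

theorem parent_apply_pivot {α : Perm X} (h : α m ≠ m) : parent m α (pivot m α) = pivot m α := by
  simp [parent, pivot_of_apply_ne h]

theorem parent_apply_self {α : Perm X} (h : α m = m) : parent m α m = pivot m α := by
  simp [parent, h]

theorem pivot_parent_ne {α : Perm X} (hα : α ≠ 1) (hβ : parent m α ≠ 1) :
    pivot m (parent m α) ≠ pivot m α := by
  by_cases hm : α m = m
  · have hβm : parent m α m ≠ m := by rw [parent_apply_self hm]; exact pivot_ne m hα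
    rw [pivot_of_apply_ne hβm, inv_parent_apply_self, Ne, Perm.inv_eq_iff_eq]
    exact fun e => apply_pivot_ne m hα e.symm
  · intro e
    exact apply_pivot_ne m hβ (by rw [e, parent_apply_pivot hm])

variable [Fintype X]

variable (m) in
theorem support_swap_mul_erase_subset {α : Perm X} {p : X} (hp : α p ≠ p) :
    (swap m p * α).support.erase m ⊆ α.support.erase m := by
  intro x hx
  rw [Finset.mem_erase, Perm.mem_support] at hx ⊢
  refine ⟨hx.1, fun hfix => hx.2 ?_⟩
  have hxp : x ≠ p := by rintro rfl; exact hp hfix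
  rw [Perm.mul_apply, hfix, swap_apply_of_ne_of_ne hx.1 hxp]

variable (m) in
noncomputable def rank (α : Perm X) : ℕ :=
  2 * (α.support.erase m).card + if α m = m then 1 else 0

theorem rank_parent_lt {α : Perm X} (hα : α ≠ 1) : rank m (parent m α) < rank m α := by
  have hsub : (parent m α).support.erase m ⊆ α.support.erase m :=
    support_swap_mul_erase_subset m (apply_pivot_ne m hα)
  by_cases hm : α m = m
  · have hβm : parent m α m ≠ m := by rw [parent_apply_self hm]; exact pivot_ne m hα
    have := Finset.card_le_card hsub
    simp only [rank, hm, hβm, if_true, if_false]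
    omega
  · have hp : pivot m α ∈ α.support.erase m :=
      Finset.mem_erase.2 ⟨pivot_ne m hα, Perm.mem_support.2 (apply_pivot_ne m hα)⟩
    have hp' : pivot m α ∉ (parent m α).support.erase m := by
      simp [parent_apply_pivot hm]
    have := Finset.card_lt_card (Finset.ssubset_iff_of_subset hsub |>.2 ⟨_, hp, hp'⟩)
    simp only [rank, hm, if_false]
    split_ifs <;> omega

theorem parent_induction {P : Perm X → Prop} (one : P 1)
    (step : ∀ α, α ≠ 1 → P (parent m α) → P α) (α : Perm X) : P α := by
  induction hr : rank m α using Nat.strong_induction_on generalizing α with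
  | _ n ih =>
    by_cases hα : α = 1
    · exact hα ▸ one
    · exact step α hα (ih _ (hr ▸ rank_parent_lt hα) _ rfl)

variable (m) in
noncomputable def treeWord (α : Perm X) : List X :=
  if hα : α = 1 then []
  else
    have := rank_parent_lt (m := m) hα
    treeWord (parent m α) ++ [α⁻¹ m]
termination_by rank m α

theorem treeWord_one : treeWord m 1 = [] := by
  rw [treeWord, dif_pos rfl]

theorem treeWord_of_ne_one {α : Perm X} (hα : α ≠ 1) :
    treeWord m α = treeWord m (parent m α) ++ [α⁻¹ m] := by
  rw [treeWord, dif_neg hα]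

theorem cons_treeWord_of_ne_one {α : Perm X} (hα : α ≠ 1) :
    m :: treeWord m α = (m :: treeWord m (parent m α)) ++ [α⁻¹ m] := by
  rw [treeWord_of_ne_one hα, List.cons_append]

theorem getLast_cons_treeWord (α : Perm X) :
    (m :: treeWord m α).getLast (List.cons_ne_nil _ _) = α⁻¹ m := by
  by_cases hα : α = 1
  · subst hα; simp [treeWord_one]
  · simp only [cons_treeWord_of_ne_one hα, List.getLast_append_singleton]

theorem getLast?_cons_treeWord (α : Perm X) : (m :: treeWord m α).getLast? = some (α⁻¹ m) := by
  rw [List.getLast?_eq_some_getLast (List.cons_ne_nil _ _), getLast_cons_treeWord]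

theorem chainProd_cons_treeWord (α : Perm X) : chainProd (m :: treeWord m α) = α := by
  induction α using parent_induction (m := m) with
  | one => simp [treeWord_one, chainProd]
  | step α hα ih =>
    rw [cons_treeWord_of_ne_one hα, chainProd_append_singleton _ (List.cons_ne_nil _ _),
      getLast_cons_treeWord, ih, parent_mul_swap]

theorem isAlternated_cons_treeWord (α : Perm X) : IsAlternated (m :: treeWord m α) := by
  induction α using parent_induction (m := m) with
  | one => simp [treeWord_one, IsAlternated]
  | step α hα ih =>
    rw [cons_treeWord_of_ne_one hα]
    refine ih.append_singleton ?_ ?_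
    · simp only [getLast?_cons_treeWord, Option.mem_def, Option.some_inj, forall_eq']
      rw [inv_parent_apply_self]
      exact α⁻¹.injective.ne (pivot_ne m hα)
    · by_cases hβ : parent m α = 1
      · simp [hβ, treeWord_one]
      · simp only [cons_treeWord_of_ne_one hβ, List.dropLast_concat, getLast?_cons_treeWord,
          Option.mem_def, Option.some_inj, forall_eq']
        rw [inv_parent_apply_self, ← inv_parent_apply_pivot (m := m) α]
        exact (parent m α)⁻¹.injective.ne (pivot_parent_ne hα hβ)

end SwapChain

/-- there is a spanning tree of Perm(d) rooted at the identity: a map f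
assigning to each permutation α an alternated factorization of α, with f(id) empty and
each non-identity node obtained from its parent by appending one transposition. -/
theorem stmt14 (d : ℕ) (hd : 2 ≤ d) :
    ∃ f : Equiv.Perm (Fin d) → List (Fin d),
      f 1 = [] ∧
      (∀ α, AltFact d (by omega) α (f α)) ∧
      (∀ α, α ≠ 1 → ∃ (β : Equiv.Perm (Fin d)) (v : Fin d), f α = f β ++ [v]) := by
  set m : Fin d := ⟨d - 1, by omega⟩
  refine ⟨SwapChain.treeWord m, SwapChain.treeWord_one, fun α => ?_,
    fun α hα => ⟨SwapChain.parent m α, α⁻¹ m, SwapChain.treeWord_of_ne_one hα⟩⟩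
  obtain ⟨hchain, hdist⟩ := SwapChain.isAlternated_cons_treeWord (m := m) α
  exact ⟨(SwapChain.chainProd_cons_treeWord α).symm, hchain, hdist⟩
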